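/- arXiv:1908.09606 — 4 statements merged into one kernel-verified Lean document; each statement's English description precedes it below -/
import Mathlib

section
/- For positive reals a, b, c with ab + ac + bc ≤ X and ab ≤ S, the quantity abc/(ac + cb) is maximized (over the constraint set, treating X as free and S fixed) by a = b = √S, c = 1, giving maximal value √S/2. -/
/-- For positive reals `a, b, c` with `ab + ac + bc ≤ X` and `ab ≤ S`, the
computational intensity `abc/(ac + cb)` is maximized (over the constraint set,
treating `X` as free and `S` fixed) by `a = b = √S`, `c = 1`, giving maximal
value `√S/2`. -/
theorem stmt_3 (S : ℝ) (hS : 0 < S) :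
    (∀ a b c X : ℝ, 0 < a → 0 < b → 0 < c →
      a * b + a * c + b * c ≤ X → a * b ≤ S →
      a * b * c / (a * c + c * b) ≤ Real.sqrt S / 2) ∧
    (Real.sqrt S * Real.sqrt S ≤ S ∧
      Real.sqrt S * Real.sqrt S * 1 / (Real.sqrt S * 1 + 1 * Real.sqrt S)
        = Real.sqrt S / 2) := by
  have hs : 0 < Real.sqrt S := Real.sqrt_pos.mpr hS
  have hSS : Real.sqrt S * Real.sqrt S = S := Real.mul_self_sqrt hS.le
  refine ⟨?_, hSS.le, ?_⟩
  · intro a b c X ha hb hc _ hab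
    have ht : Real.sqrt (a * b) ^ 2 = a * b := Real.sq_sqrt (by positivity)
    have hts : Real.sqrt (a * b) ≤ Real.sqrt S := Real.sqrt_le_sqrt hab
    have htab : 2 * Real.sqrt (a * b) ≤ a + b := by
      nlinarith [sq_nonneg (Real.sqrt a - Real.sqrt b), Real.sq_sqrt ha.le,
        Real.sq_sqrt hb.le, Real.sqrt_mul ha.le b]
    rw [div_le_iff₀ (by positivity)]
    have key : a * b ≤ Real.sqrt S / 2 * (a + b) := by
      nlinarith [Real.sqrt_nonneg (a * b)]
    nlinarith [mul_le_mul_of_nonneg_right key hc.le]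
  · field_simp
    nlinarith [hSS]
end

section
/- Let α, β, γ be finite subsets of ℤ² being the three axis-aligned projections of a finite set V ⊆ ℤ³ (α the projection forgetting the second coordinate, β forgetting the first, γ forgetting the third). Then |V| ≤ √(|α|·|β|·|γ|). -/
/-!
Group `V` into its fibres `V_{xy}` over the projection `γ`. The fibre over `(x, y)` embeds into
the row of `α` over `x` and into the row of `β` over `y`, so `|V_{xy}|² ≤ |α_x| |β_y|`, and
summing over `γ` gives `∑ |V_{xy}|² ≤ |α| |β|`. Cauchy–Schwarz over the `|γ|` fibres then yields
`|V|² ≤ |γ| ∑ |V_{xy}|² ≤ |α| |β| |γ|`.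
-/

open Finset

namespace Finset

variable {ι κ X Y Z : Type*} [DecidableEq X] [DecidableEq Y]

theorem card_sq_le_card_image_mul_sum_sq_card_fiber [DecidableEq κ] (s : Finset ι) (f : ι → κ) :
    #s ^ 2 ≤ #(s.image f) * ∑ b ∈ s.image f, #{a ∈ s | f a = b} ^ 2 := by
  rw [card_eq_sum_card_image f s]
  exact sq_sum_le_card_mul_sum_sq

theorem sum_card_fiber_mul_card_fiber_le {s : Finset (X × Y)} {A : Finset (X × Z)}
    {B : Finset (Y × Z)} (hs : s ⊆ A.image Prod.fst ×ˢ B.image Prod.fst) :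
    ∑ p ∈ s, #{q ∈ A | q.1 = p.1} * #{q ∈ B | q.1 = p.2} ≤ #A * #B :=
  calc ∑ p ∈ s, #{q ∈ A | q.1 = p.1} * #{q ∈ B | q.1 = p.2}
      ≤ ∑ p ∈ A.image Prod.fst ×ˢ B.image Prod.fst,
          #{q ∈ A | q.1 = p.1} * #{q ∈ B | q.1 = p.2} :=
        sum_le_sum_of_subset hs
    _ = #A * #B := by
        simp only [sum_product, ← sum_mul_sum, ← card_eq_sum_card_image]

theorem card_fiber_xy_le_card_fiber_xz [DecidableEq Z] (V : Finset (X × Y × Z)) (p : X × Y) :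
    #{v ∈ V | (v.1, v.2.1) = p} ≤
      #{q ∈ V.image (fun v => (v.1, v.2.2)) | q.1 = p.1} := by
  refine card_le_card_of_injOn (fun v => (v.1, v.2.2)) ?_ ?_
  · intro v hv
    obtain ⟨hvV, rfl⟩ := mem_filter.1 hv
    exact mem_filter.2 ⟨mem_image_of_mem _ hvV, rfl⟩
  · rintro ⟨x, y, z⟩ hv ⟨x', y', z'⟩ hv' h
    simp only [coe_filter, Set.mem_ofPred_eq] at hv hv'
    grind

theorem card_fiber_xy_le_card_fiber_yz [DecidableEq Z] (V : Finset (X × Y × Z)) (p : X × Y) :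
    #{v ∈ V | (v.1, v.2.1) = p} ≤
      #{q ∈ V.image (fun v => (v.2.1, v.2.2)) | q.1 = p.2} := by
  refine card_le_card_of_injOn (fun v => (v.2.1, v.2.2)) ?_ ?_
  · intro v hv
    obtain ⟨hvV, rfl⟩ := mem_filter.1 hv
    exact mem_filter.2 ⟨mem_image_of_mem _ hvV, rfl⟩
  · rintro ⟨x, y, z⟩ hv ⟨x', y', z'⟩ hv' h
    simp only [coe_filter, Set.mem_ofPred_eq] at hv hv'
    grind

end Finset

/-- Discrete Loomis–Whitney inequality: if `α, β, γ` are the three axis-aligned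
projections of a finite set `V ⊆ ℤ³` (`α` forgetting the second coordinate,
`β` forgetting the first, `γ` forgetting the third), then
`|V| ≤ √(|α|·|β|·|γ|)`. -/
theorem stmt_5 (V : Finset (ℤ × ℤ × ℤ)) :
    let α := V.image (fun v => (v.1, v.2.2))
    let β := V.image (fun v => (v.2.1, v.2.2))
    let γ := V.image (fun v => (v.1, v.2.1))
    (V.card : ℝ) ≤ Real.sqrt ((α.card : ℝ) * (β.card : ℝ) * (γ.card : ℝ)) := by
  intro α β γ
  have hfiber (p : ℤ × ℤ) :
      #{v ∈ V | (v.1, v.2.1) = p} ^ 2 ≤ #{q ∈ α | q.1 = p.1} * #{q ∈ β | q.1 = p.2} :=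
    (sq _).trans_le <| Nat.mul_le_mul (card_fiber_xy_le_card_fiber_xz V p)
      (card_fiber_xy_le_card_fiber_yz V p)
  have hγ : γ ⊆ α.image Prod.fst ×ˢ β.image Prod.fst := by
    intro p hp
    obtain ⟨v, hv, rfl⟩ := mem_image.1 hp
    exact mem_product.2 ⟨mem_image.2 ⟨(v.1, v.2.2), mem_image_of_mem _ hv, rfl⟩,
      mem_image.2 ⟨(v.2.1, v.2.2), mem_image_of_mem _ hv, rfl⟩⟩
  have hsq : #V ^ 2 ≤ #α * #β * #γ :=
    calc #V ^ 2 ≤ #γ * ∑ p ∈ γ, #{v ∈ V | (v.1, v.2.1) = p} ^ 2 :=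
          card_sq_le_card_image_mul_sum_sq_card_fiber V _
      _ ≤ #γ * (#α * #β) := by
          gcongr
          exact (sum_le_sum fun p _ => hfiber p).trans (sum_card_fiber_mul_card_fiber_le hγ)
      _ = #α * #β * #γ := mul_comm _ _
  exact Real.le_sqrt_of_sq_le (by exact_mod_cast hsq)
end

section
/- For positive reals a, b subject to ab + a + 1 ≤ S (with S ≥ 3) maximizing ρ = ab/(a+b), the optimal values are a = (√((S−1)³) − S + 1)/(S−2) and b = −(2S + √((S−1)³) − S² − 1)/(√((S−1)³) − S + 1), and both satisfy a < √S and b < √S. -/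
/-- For positive reals `a, b` subject to `ab + a + 1 ≤ S` (with `S ≥ 3`)
maximizing `ρ = ab/(a+b)`, the optimal values are
`a = (√((S−1)³) − S + 1)/(S−2)` and
`b = −(2S + √((S−1)³) − S² − 1)/(√((S−1)³) − S + 1)`,
and both satisfy `a < √S` and `b < √S`. -/
theorem stmt_7 (S : ℝ) (hS : 3 ≤ S) :
    let A : ℝ := (Real.sqrt ((S - 1) ^ 3) - S + 1) / (S - 2)
    let B : ℝ := -(2 * S + Real.sqrt ((S - 1) ^ 3) - S ^ 2 - 1) /
      (Real.sqrt ((S - 1) ^ 3) - S + 1)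
    0 < A ∧ 0 < B ∧ A * B + A + 1 ≤ S ∧
    (∀ a b : ℝ, 0 < a → 0 < b → a * b + a + 1 ≤ S →
      a * b / (a + b) ≤ A * B / (A + B)) ∧
    A < Real.sqrt S ∧ B < Real.sqrt S := by
  intro A B
  set s : ℝ := Real.sqrt (S - 1) with hsdef
  have hs2 : s ^ 2 = S - 1 := Real.sq_sqrt (by linarith)
  have hs1 : 1 < s := by
    nlinarith [Real.sqrt_nonneg (S - 1)]
  have hs0 : 0 < s := by linarith
  have ht : Real.sqrt ((S - 1) ^ 3) = (S - 1) * s := by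
    rw [show (S - 1) ^ 3 = ((S - 1) * s) ^ 2 by rw [mul_pow, hs2]; ring]
    exact Real.sqrt_sq (by nlinarith)
  have hSs : S - 1 = s ^ 2 := hs2.symm
  have hsp1 : (0:ℝ) < s + 1 := by linarith
  have hA : A = s ^ 2 / (s + 1) := by
    show (Real.sqrt ((S - 1) ^ 3) - S + 1) / (S - 2) = _
    rw [ht]
    rw [div_eq_div_iff (by linarith : S - 2 ≠ 0) (by linarith : s + 1 ≠ 0)]
    linear_combination hs2
  have hB : B = s := by
    show -(2 * S + Real.sqrt ((S - 1) ^ 3) - S ^ 2 - 1) /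
      (Real.sqrt ((S - 1) ^ 3) - S + 1) = s
    rw [ht]
    have hden : (S - 1) * s - S + 1 = s ^ 2 * (s - 1) := by nlinarith
    have hnum : -(2 * S + (S - 1) * s - S ^ 2 - 1) = s ^ 3 * (s - 1) := by nlinarith
    rw [hden, hnum, div_eq_iff (ne_of_gt (by nlinarith : (0:ℝ) < s ^ 2 * (s - 1)))]
    ring
  have hApos : 0 < A := by rw [hA]; positivity
  refine ⟨hApos, by rw [hB]; exact hs0, ?_, ?_, ?_, ?_⟩
  · rw [hA, hB]
    have : s ^ 2 / (s + 1) * s + s ^ 2 / (s + 1) + 1 = s ^ 2 + 1 := by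
      field_simp
    rw [this]; linarith
  · intro a b ha hb hcon
    have hAB : A * B / (A + B) = s ^ 2 / (2 * s + 1) := by
      rw [hA, hB]
      rw [div_eq_div_iff (by positivity : s ^ 2 / (s + 1) + s ≠ 0) (by positivity : 2 * s + 1 ≠ 0)]
      field_simp
      ring
    rw [hAB]
    rw [div_le_div_iff₀ (by linarith) (by linarith)]
    -- key: a*b*(2s+1) ≤ s²*(a+b)
    have hc : a * b + a ≤ s ^ 2 := by linarith
    nlinarith [sq_nonneg (a * (s + 1) - s ^ 2), mul_pos ha hb,
      mul_nonneg (sub_nonneg.mpr hc) (sq_nonneg s),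
      mul_nonneg (mul_nonneg ha.le hb.le) hs0.le,
      mul_nonneg (sub_nonneg.mpr hc) (sub_nonneg.mpr hc),
      mul_pos (mul_pos ha hb) hs0]
  · have hAs : A < s := by
      rw [hA, div_lt_iff₀ hsp1]; nlinarith
    have : s < Real.sqrt S := by
      rw [show s = Real.sqrt (S-1) from rfl]
      exact Real.sqrt_lt_sqrt (by linarith) (by linarith)
    linarith
  · rw [hB]
    exact lt_of_eq_of_lt rfl (by
      rw [show s = Real.sqrt (S-1) from rfl]
      exact Real.sqrt_lt_sqrt (by linarith) (by linarith))
end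

section
/- The I/O cost of the parallel MMM schedule with local-domain side a ∈ (0, √S] is Q(a) = 2mnk/(pa) + a², and the corresponding latency is L(a) = 2mnk/(pa(S − a²)); Q is decreasing in a on (0, √S) while L is increasing in a on (√(S/3), √S). -/
set_option maxHeartbeats 1000000


/-- The I/O cost of the parallel MMM schedule with local-domain side
`a ∈ (0, √S]` is `Q(a) = 2mnk/(pa) + a²`, and the corresponding latency is
`L(a) = 2mnk/(pa(S − a²))`; `Q` is decreasing in `a` on `(0, √S)` while `L` is
increasing in `a` on `(√(S/3), √S)`.  (The memory constraint `a² ≤ S` is binding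
in the regime `mnk/p ≥ S^{3/2}`.) -/
theorem stmt_12 (m n k p S : ℝ) (hm : 0 < m) (hn : 0 < n) (hk : 0 < k)
    (hp : 0 < p) (hS : 0 < S) (hreg : S ^ ((3 : ℝ) / 2) ≤ m * n * k / p) :
    (∀ a₁ a₂ : ℝ, 0 < a₁ → a₁ < a₂ → a₂ < Real.sqrt S →
      2 * m * n * k / (p * a₂) + a₂ ^ 2 < 2 * m * n * k / (p * a₁) + a₁ ^ 2) ∧
    (∀ a₁ a₂ : ℝ, Real.sqrt (S / 3) < a₁ → a₁ < a₂ → a₂ < Real.sqrt S →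
      2 * m * n * k / (p * a₁ * (S - a₁ ^ 2))
        < 2 * m * n * k / (p * a₂ * (S - a₂ ^ 2))) := by
  set s := Real.sqrt S with hs_def
  have hs : 0 < s := Real.sqrt_pos.mpr hS
  have hs2 : s ^ 2 = S := Real.sq_sqrt hS.le
  have hpow : S ^ ((3 : ℝ) / 2) = s ^ 3 := by
    rw [hs_def, Real.sqrt_eq_rpow, ← Real.rpow_natCast (S ^ ((1:ℝ)/2)) 3,
      ← Real.rpow_mul hS.le]
    norm_num
  have hkey : p * s ^ 3 ≤ m * n * k := by
    have := hreg
    rw [hpow, le_div_iff₀ hp] at this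
    linarith
  constructor
  · intro a₁ a₂ h1 h12 h2s
    have h2 : 0 < a₂ := h1.trans h12
    have h1s : a₁ < s := h12.trans h2s
    have hpa₁ : 0 < p * a₁ := by positivity
    have hpa₂ : 0 < p * a₂ := by positivity
    have e₁ : 2 * m * n * k / (p * a₁) + a₁ ^ 2
        = (2 * m * n * k + a₁ ^ 2 * (p * a₁)) / (p * a₁) := by
      field_simp
    have e₂ : 2 * m * n * k / (p * a₂) + a₂ ^ 2
        = (2 * m * n * k + a₂ ^ 2 * (p * a₂)) / (p * a₂) := by
      field_simp
    rw [e₁, e₂, div_lt_div_iff₀ hpa₂ hpa₁]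
    have hcube : a₁ * a₂ * (a₁ + a₂) < 2 * s ^ 3 := by
      nlinarith [mul_pos h1 h2, mul_pos hs hs,
        mul_pos (sub_pos.mpr h1s) (sub_pos.mpr h2s),
        mul_pos hs (mul_pos (sub_pos.mpr h1s) (sub_pos.mpr h2s)),
        mul_pos h1 (sub_pos.mpr h2s), mul_pos h2 (sub_pos.mpr h1s),
        mul_pos (mul_pos h1 h2) (sub_pos.mpr h1s),
        mul_pos (mul_pos h1 h2) (sub_pos.mpr h2s)]
    have hstep : p * (a₁ * a₂ * (a₁ + a₂)) < 2 * (m * n * k) := by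
      have := mul_lt_mul_of_pos_left hcube hp
      nlinarith [hkey]
    nlinarith [mul_pos (mul_pos hp (sub_pos.mpr h12)) (sub_pos.mpr hstep)]
  · intro a₁ a₂ hA1 h12 h2s
    have hq : 0 < Real.sqrt (S / 3) := Real.sqrt_pos.mpr (by linarith)
    have h1 : 0 < a₁ := hq.trans hA1
    have h2 : 0 < a₂ := h1.trans h12
    have h1s : a₁ < s := h12.trans h2s
    have hA : S / 3 < a₁ ^ 2 := by
      have := Real.sq_sqrt (show (0:ℝ) ≤ S / 3 by linarith)
      nlinarith [mul_lt_mul_of_pos_left hA1 hq, mul_lt_mul_of_pos_right hA1 h1]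
    have hS1 : a₁ ^ 2 < S := by
      rw [← hs2]; exact pow_lt_pow_left₀ h1s h1.le (by norm_num)
    have hS2 : a₂ ^ 2 < S := by
      rw [← hs2]; exact pow_lt_pow_left₀ h2s h2.le (by norm_num)
    have hd2 : 0 < p * a₂ * (S - a₂ ^ 2) := by
      have : 0 < S - a₂ ^ 2 := by linarith
      positivity
    have hsum : 0 < a₁ ^ 2 + a₁ * a₂ + a₂ ^ 2 - S := by
      nlinarith [hA, mul_pos h1 (sub_pos.mpr h12),
        mul_pos (sub_pos.mpr h12) (add_pos h1 h2)]
    have hlt : p * a₂ * (S - a₂ ^ 2) < p * a₁ * (S - a₁ ^ 2) := by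
      have key := mul_pos (mul_pos hp (sub_pos.mpr h12)) hsum
      nlinarith [key]
    have hnum : (0:ℝ) < 2 * m * n * k := by positivity
    exact div_lt_div_of_pos_left hnum hd2 hlt
end
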